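/- Let X be a reflexive Banach space with a suppression 1-unconditional Schauder basis (e_j)_{j=1}^∞ that is λ-asymptotic c₀, i.e., for every normalized block basis (x_j)_{j=1}^∞ of (e_j) and every n ∈ ℕ there exist indices j_1 < ... < j_n with max_{1≤i≤n}|a_i| ≤ ‖Σ_{i=1}^n a_i x_{j_i}‖ ≤ λ · max_{1≤i≤n}|a_i| for all scalars a_1, ..., a_n. Then K(X) ≤ λ, where K(X) := sup{σ ≥ 0 : the closed unit ball of X contains a sequence (x_n) with ‖x_n − x_m‖ ≥ σ for all n ≠ m}. -/

import Mathlib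

open Filter Topology

/-- The Kottman constant `K(X)`. -/
noncomputable def kottmanConst (X : Type*) [NormedAddCommGroup X] [NormedSpace ℝ X] : ℝ :=
  sSup {σ : ℝ | 0 ≤ σ ∧ ∃ x : ℕ → X, (∀ n, ‖x n‖ ≤ 1) ∧
    ∀ n m : ℕ, n ≠ m → σ ≤ ‖x n - x m‖}

/-- `e` is a Schauder basis of `X`: every `x ∈ X` has a unique expansion
`x = Σ_{j} a j • e j` with norm-convergent partial sums. -/
def IsSchauderBasis {X : Type*} [NormedAddCommGroup X] [NormedSpace ℝ X] (e : ℕ → X) : Prop :=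
  ∀ x : X, ∃! a : ℕ → ℝ,
    Tendsto (fun N => ∑ j ∈ Finset.range N, a j • e j) atTop (nhds x)

/-- `e` is suppression `1`-unconditional: deleting coefficients from a finitely supported
linear combination never increases the norm. -/
def SuppressionOneUnconditional {X : Type*} [NormedAddCommGroup X] [NormedSpace ℝ X]
    (e : ℕ → X) : Prop :=
  ∀ (α : ℕ →₀ ℝ) (A : Finset ℕ),
    ‖∑ j ∈ A, α j • e j‖ ≤ ‖∑ j ∈ α.support, α j • e j‖

/-- `x` is a normalised block basis of `e`. -/
def IsNormalizedBlockBasis {X : Type*} [NormedAddCommGroup X] [NormedSpace ℝ X]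
    (e x : ℕ → X) : Prop :=
  ∃ (F : ℕ → Finset ℕ) (a : ℕ → ℝ),
    (∀ j, (F j).Nonempty) ∧
    (∀ j, ∀ i ∈ F j, ∀ i' ∈ F (j + 1), i < i') ∧
    (∀ j, x j = ∑ i ∈ F j, a i • e i) ∧
    (∀ j, ‖x j‖ = 1)

/-- The basis `e` is `λ`-asymptotic `c₀`. -/
def IsAsymptoticC0 {X : Type*} [NormedAddCommGroup X] [NormedSpace ℝ X]
    (e : ℕ → X) (lam : ℝ) : Prop :=
  ∀ x : ℕ → X, IsNormalizedBlockBasis e x →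
    ∀ n : ℕ, ∃ j : Fin n → ℕ, StrictMono j ∧
      ∀ a : Fin n → ℝ,
        (∀ i, |a i| ≤ ‖∑ i, a i • x (j i)‖) ∧
        ‖∑ i, a i • x (j i)‖ ≤ lam * ⨆ i, |a i|


/-!
Let `(y n)` be a `σ`-separated sequence in the unit ball. By reflexivity the ball is weakly
compact, so `(y n)` has a weak cluster point `x`; in particular each finite head of the basis
expansion of `y n` is frequently close to the corresponding head of `x`. A sliding hump then
yields indices `N k` and cut points `Q k` such that `y (N k)` is, up to `2 ε`, the block `b k` of
`y (N k) - x` on `[Q k, Q (k + 1))` plus the head of `x` up to `Q (k + 1)`, and these heads of `x`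
differ by less than `ε`. Suppression unconditionality gives `‖b k‖ ≤ 1 + ε`, and since the
normalized `b k` form a block basis, the asymptotic-`c₀` property yields `k < l` with
`‖b k - b l‖ ≤ λ (1 + ε)`. Hence `σ ≤ ‖y (N k) - y (N l)‖ ≤ λ (1 + ε) + 5 ε`; let `ε → 0`.
-/

open Finset

section

variable {X : Type*} [NormedAddCommGroup X] [NormedSpace ℝ X] {e : ℕ → X}

theorem SuppressionOneUnconditional.norm_sum_le_of_subset (hs : SuppressionOneUnconditional e)
    (b : ℕ → ℝ) {A B : Finset ℕ} (hAB : A ⊆ B) :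
    ‖∑ j ∈ A, b j • e j‖ ≤ ‖∑ j ∈ B, b j • e j‖ := by
  classical
  set α : ℕ →₀ ℝ := Finsupp.indicator B fun j _ => b j
  have hα : ∀ j ∈ B, α j = b j := fun j hj => Finsupp.indicator_of_mem hj _
  calc ‖∑ j ∈ A, b j • e j‖ = ‖∑ j ∈ A, α j • e j‖ := by
        rw [sum_congr rfl fun j hj => by rw [← hα j (hAB hj)]]
    _ ≤ ‖∑ j ∈ α.support, α j • e j‖ := hs α A
    _ = ‖∑ j ∈ B, b j • e j‖ := by
        rw [sum_subset (Finsupp.support_indicator_subset _ _) fun j _ hj => by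
          rw [Finsupp.notMem_support_iff.mp hj, zero_smul]]
        rw [sum_congr rfl fun j hj => by rw [hα j hj]]

namespace IsSchauderBasis

variable (hb : IsSchauderBasis e)
include hb

noncomputable def coeff : X →ₗ[ℝ] ℕ → ℝ where
  toFun x := (hb x).exists.choose
  map_add' x y := (hb (x + y)).unique (hb (x + y)).exists.choose_spec <| by
    simpa [add_smul, sum_add_distrib] using
      (hb x).exists.choose_spec.add (hb y).exists.choose_spec
  map_smul' t x := (hb (t • x)).unique (hb (t • x)).exists.choose_spec <| by
    simpa [smul_sum, smul_smul] using (hb x).exists.choose_spec.const_smul t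

theorem tendsto_coeff (x : X) :
    Tendsto (fun N => ∑ j ∈ range N, hb.coeff x j • e j) atTop (𝓝 x) :=
  (hb x).exists.choose_spec

theorem ne_zero (j : ℕ) : e j ≠ 0 := by
  intro hj
  have hsingle :
      Tendsto (fun N => ∑ i ∈ range N, (Pi.single j 1 : ℕ → ℝ) i • e i) atTop (𝓝 0) := by
    simp [Pi.single_apply, ite_smul, hj]
  have hzero : Tendsto (fun N => ∑ i ∈ range N, (0 : ℕ → ℝ) i • e i) atTop (𝓝 0) := by simp
  simpa using congrFun ((hb 0).unique hsingle hzero) j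

noncomputable def partialSum (q : ℕ) : X →ₗ[ℝ] X :=
  ∑ j ∈ range q, (LinearMap.proj j ∘ₗ hb.coeff).smulRight (e j)

theorem partialSum_apply (q : ℕ) (x : X) :
    hb.partialSum q x = ∑ j ∈ range q, hb.coeff x j • e j := by
  simp [partialSum]

theorem partialSum_sub_partialSum {u v : ℕ} (huv : u ≤ v) (x : X) :
    hb.partialSum v x - hb.partialSum u x = ∑ j ∈ Ico u v, hb.coeff x j • e j := by
  rw [partialSum_apply, partialSum_apply, sum_Ico_eq_sub _ huv]

theorem tendsto_partialSum (x : X) : Tendsto (fun q => hb.partialSum q x) atTop (𝓝 x) := by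
  simpa only [partialSum_apply] using hb.tendsto_coeff x

section Suppression

variable (hs : SuppressionOneUnconditional e)
include hs

theorem norm_sum_coeff_le (x : X) (A : Finset ℕ) : ‖∑ j ∈ A, hb.coeff x j • e j‖ ≤ ‖x‖ := by
  obtain ⟨n, hn⟩ := A.exists_nat_subset_range
  refine ge_of_tendsto (hb.tendsto_coeff x).norm ?_
  filter_upwards [eventually_ge_atTop n] with N hN
  exact hs.norm_sum_le_of_subset _ (hn.trans (range_subset_range.2 hN))

noncomputable def coeffCLM (j : ℕ) : StrongDual ℝ X :=
  (LinearMap.proj j ∘ₗ hb.coeff).mkContinuous ‖e j‖⁻¹ fun x => by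
    have h := hb.norm_sum_coeff_le hs x {j}
    rw [sum_singleton, norm_smul] at h
    rw [inv_mul_eq_div, le_div_iff₀ (norm_pos_iff.2 (hb.ne_zero j))]
    exact h

theorem exists_mapClusterPt_coeff
    (hrefl : Function.Surjective (NormedSpace.inclusionInDoubleDual ℝ X))
    {R : ℝ} {y : ℕ → X} (hy : ∀ n, ‖y n‖ ≤ R) :
    ∃ x, MapClusterPt (hb.coeff x) atTop (fun n => hb.coeff (y n)) := by
  set Y : ℕ → WeakDual ℝ (StrongDual ℝ X) :=
    fun n => StrongDual.toWeakDual (NormedSpace.inclusionInDoubleDual ℝ X (y n))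
  have hK := WeakDual.isCompact_closedBall (0 : StrongDual ℝ (StrongDual ℝ X)) R
  have hYK : ∀ n, Y n ∈
      WeakDual.toStrongDual ⁻¹' Metric.closedBall (0 : StrongDual ℝ (StrongDual ℝ X)) R :=
    fun n => by
      simp only [Set.mem_preimage, Metric.mem_closedBall]
      exact (dist_zero_right (NormedSpace.inclusionInDoubleDual ℝ X (y n)) :).le.trans
        ((NormedSpace.double_dual_bound ℝ X (y n)).trans (hy n))
  obtain ⟨Φ, -, hΦ⟩ := hK.exists_clusterPt (f := map Y atTop)
    (le_principal_iff.2 (mem_map.2 (Eventually.of_forall hYK)))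
  obtain ⟨x, hx⟩ := hrefl (WeakDual.toStrongDual Φ)
  set g : WeakDual ℝ (StrongDual ℝ X) → ℕ → ℝ := fun Ψ j => Ψ (hb.coeffCLM hs j)
  have hg : Continuous g := continuous_pi fun j => WeakDual.eval_continuous _
  have hgΦ : g Φ = hb.coeff x := funext fun j => (congrArg (· (hb.coeffCLM hs j)) hx).symm
  exact ⟨x, hgΦ ▸ MapClusterPt.continuousAt_comp hg.continuousAt hΦ⟩

end Suppression

end IsSchauderBasis

theorem exists_strictMono_interlaced {A B : ℕ → ℕ → Prop}
    (hA : ∀ q m, ∃ n, m < n ∧ A q n) (hB : ∀ n q, ∃ q', q < q' ∧ B n q') (p : ℕ) :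
    ∃ N Q : ℕ → ℕ, StrictMono N ∧ StrictMono Q ∧ Q 0 = p ∧
      ∀ k, A (Q k) (N k) ∧ B (N k) (Q (k + 1)) := by
  choose fA hfA using hA
  choose fB hfB using hB
  set T : ℕ × ℕ → ℕ × ℕ := fun s => (fA s.2 s.1, fB (fA s.2 s.1) s.2)
  set s : ℕ → ℕ × ℕ := fun k => T^[k] (0, p)
  have hs : ∀ k, s (k + 1) = T (s k) := fun k => Function.iterate_succ_apply' T k _
  refine ⟨fun k => (s (k + 1)).1, fun k => (s k).2, strictMono_nat_of_lt_succ fun k => ?_,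
    strictMono_nat_of_lt_succ fun k => ?_, rfl, fun k => ?_⟩
  · rw [hs (k + 1)]; exact (hfA _ _).1
  · rw [hs k]; exact (hfB _ _).1
  · show A (s k).2 (s (k + 1)).1 ∧ B (s (k + 1)).1 (s (k + 1)).2
    rw [hs k]; exact ⟨(hfA _ _).2, (hfB _ _).2⟩

theorem isNormalizedBlockBasis_of_blocks {Q : ℕ → ℕ} (hQ : StrictMono Q) (c : ℕ → ℕ → ℝ)
    {z : ℕ → X} (hz : ∀ k, z k = ∑ i ∈ Ico (Q k) (Q (k + 1)), c k i • e i)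
    (hnorm : ∀ k, ‖z k‖ = 1) : IsNormalizedBlockBasis e z := by
  classical
  have hdisj : ∀ {i k l}, i ∈ Ico (Q k) (Q (k + 1)) → i ∈ Ico (Q l) (Q (l + 1)) → k = l := by
    intro i k l hk hl
    rw [mem_Ico] at hk hl
    by_contra hne
    rcases Nat.lt_or_gt_of_ne hne with h | h
    · have := hQ.monotone (show k + 1 ≤ l by omega); omega
    · have := hQ.monotone (show l + 1 ≤ k by omega); omega
  refine ⟨fun k => Ico (Q k) (Q (k + 1)),
    fun i => if h : ∃ k, i ∈ Ico (Q k) (Q (k + 1)) then c h.choose i else 0,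
    fun k => nonempty_Ico.2 (hQ k.lt_succ_self), fun k i hi i' hi' => ?_, fun k => ?_, hnorm⟩
  · rw [mem_Ico] at hi hi'; omega
  · rw [hz k]
    refine sum_congr rfl fun i hi => ?_
    have h : ∃ k, i ∈ Ico (Q k) (Q (k + 1)) := ⟨k, hi⟩
    dsimp only
    rw [dif_pos h, hdisj h.choose_spec hi]

theorem exists_isNormalizedBlockBasis_smul_eq (he : ∀ j, e j ≠ 0) {Q : ℕ → ℕ}
    (hQ : StrictMono Q) (β : ℕ → ℕ → ℝ) :
    ∃ z, IsNormalizedBlockBasis e z ∧ ∀ k,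
      ∑ i ∈ Ico (Q k) (Q (k + 1)), β k i • e i =
        ‖∑ i ∈ Ico (Q k) (Q (k + 1)), β k i • e i‖ • z k := by
  classical
  set b : ℕ → X := fun k => ∑ i ∈ Ico (Q k) (Q (k + 1)), β k i • e i
  -- A vanishing block is replaced by the normalized first basis vector of its interval.
  set z : ℕ → X := fun k => if b k = 0 then ‖e (Q k)‖⁻¹ • e (Q k) else ‖b k‖⁻¹ • b k
  refine ⟨z, isNormalizedBlockBasis_of_blocks hQ
    (fun k i => if b k = 0 then (if i = Q k then ‖e (Q k)‖⁻¹ else 0) else ‖b k‖⁻¹ * β k i)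
    (fun k => ?_) (fun k => ?_), fun k => ?_⟩
  · by_cases h : b k = 0
    · simp only [z, h, if_true, ite_smul, zero_smul, sum_ite_eq',
        mem_Ico.2 ⟨le_rfl, hQ k.lt_succ_self⟩]
    · simp only [z, h, if_false, mul_smul, ← smul_sum, b]
  · by_cases h : b k = 0
    · simp only [z, h, if_true]; exact norm_smul_inv_norm (he _)
    · simp only [z, h, if_false]; exact norm_smul_inv_norm h
  · by_cases h : b k = 0
    · change b k = ‖b k‖ • z k; simp [h]
    · change b k = ‖b k‖ • z k
      simp only [z, h, if_false]
      exact (smul_inv_smul₀ (norm_ne_zero_iff.2 h) _).symm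

namespace IsAsymptoticC0

variable {lam : ℝ} (hasym : IsAsymptoticC0 e lam) {z : ℕ → X} (hz : IsNormalizedBlockBasis e z)
include hasym hz

theorem one_le : 1 ≤ lam := by
  obtain ⟨j, -, hj⟩ := hasym z hz 1
  obtain ⟨-, -, -, -, -, hnorm⟩ := hz
  simpa [hnorm] using (hj 1).2

theorem exists_norm_smul_sub_smul_le {c : ℕ → ℝ} {M : ℝ} (hc : ∀ k, |c k| ≤ M) :
    ∃ k l, k < l ∧ ‖c k • z k - c l • z l‖ ≤ lam * M := by
  obtain ⟨j, hj, hest⟩ := hasym z hz 2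
  set a : Fin 2 → ℝ := ![c (j 0), -c (j 1)]
  have hsup : ⨆ i, |a i| ≤ M := ciSup_le fun i => by fin_cases i <;> simp [a, hc]
  refine ⟨j 0, j 1, hj (by decide), ?_⟩
  calc ‖c (j 0) • z (j 0) - c (j 1) • z (j 1)‖ = ‖∑ i, a i • z (j i)‖ := by
        simp [a, Fin.sum_univ_two, sub_eq_add_neg]
    _ ≤ lam * ⨆ i, |a i| := (hest a).2
    _ ≤ lam * M := mul_le_mul_of_nonneg_left hsup (zero_le_one.trans (hasym.one_le hz))

end IsAsymptoticC0

namespace IsSchauderBasis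

variable (hb : IsSchauderBasis e) (hs : SuppressionOneUnconditional e)
include hb hs

theorem exists_subseq_near_block_differences
    (hrefl : Function.Surjective (NormedSpace.inclusionInDoubleDual ℝ X))
    {R : ℝ} {y : ℕ → X} (hy : ∀ n, ‖y n‖ ≤ R) {ε : ℝ} (hε : 0 < ε) :
    ∃ (N : ℕ → ℕ) (z : ℕ → X) (c : ℕ → ℝ), StrictMono N ∧ IsNormalizedBlockBasis e z ∧
      (∀ k, |c k| ≤ R + ε) ∧
      ∀ k l, ‖(y (N k) - y (N l)) - (c k • z k - c l • z l)‖ ≤ 5 * ε := by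
  obtain ⟨x, hx⟩ := hb.exists_mapClusterPt_coeff hs hrefl hy
  set S := hb.partialSum
  obtain ⟨p, hp⟩ : ∃ p, ∀ u ≥ p, ∀ v ≥ p, ‖S u x - S v x‖ < ε := by
    simpa only [dist_eq_norm] using
      Metric.cauchySeq_iff.1 (hb.tendsto_partialSum x).cauchySeq ε hε
  have hhead : ∀ q m, ∃ n, m < n ∧ ‖S q (y n) - S q x‖ < ε := by
    intro q m
    have hcont : Continuous fun c : ℕ → ℝ => ∑ j ∈ range q, c j • e j :=
      continuous_finsetSum _ fun j _ => (continuous_apply j).smul continuous_const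
    obtain ⟨n, hn, hball⟩ := frequently_atTop.1
      ((hx.continuousAt_comp hcont.continuousAt).frequently (Metric.ball_mem_nhds _ hε)) (m + 1)
    exact ⟨n, hn, by simpa [S, partialSum_apply, dist_eq_norm] using hball⟩
  have htail : ∀ n q, ∃ q', q < q' ∧ ‖y n - S q' (y n)‖ < ε := by
    intro n q
    obtain ⟨q₀, hq₀⟩ := Metric.tendsto_atTop.1 (hb.tendsto_partialSum (y n)) ε hε
    exact ⟨max q₀ (q + 1), by omega, by simpa [dist_eq_norm'] using hq₀ _ (le_max_left _ _)⟩
  obtain ⟨N, Q, hN, hQ, rfl, hNQ⟩ := exists_strictMono_interlaced hhead htail p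
  obtain ⟨z, hz, hbz⟩ := exists_isNormalizedBlockBasis_smul_eq hb.ne_zero hQ
    fun k => hb.coeff (y (N k) - x)
  set b : ℕ → X := fun k => ∑ i ∈ Ico (Q k) (Q (k + 1)), hb.coeff (y (N k) - x) i • e i
  have hb_eq : ∀ k, b k = (S (Q (k + 1)) (y (N k)) - S (Q k) (y (N k)))
      - (S (Q (k + 1)) x - S (Q k) x) := fun k => by
    rw [← sub_sub_sub_comm, ← map_sub, ← map_sub]
    exact (hb.partialSum_sub_partialSum (hQ.monotone k.le_succ) _).symm
  have hQ0 : ∀ k, Q 0 ≤ Q k := fun k => hQ.monotone k.zero_le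
  have hrem : ∀ m, ‖y (N m) - b m - S (Q (m + 1)) x‖ ≤ 2 * ε := fun m => by
    have h : y (N m) - b m - S (Q (m + 1)) x
        = (y (N m) - S (Q (m + 1)) (y (N m))) + (S (Q m) (y (N m)) - S (Q m) x) := by
      rw [hb_eq]; abel
    rw [h]
    linarith [norm_add_le (y (N m) - S (Q (m + 1)) (y (N m))) (S (Q m) (y (N m)) - S (Q m) x),
      (hNQ m).1, (hNQ m).2]
  refine ⟨N, z, fun k => ‖b k‖, hN, hz, fun k => ?_, fun k l => ?_⟩
  · rw [abs_norm, hb_eq]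
    refine (norm_sub_le _ _).trans (add_le_add ?_ (hp _ (hQ0 _) _ (hQ0 _)).le)
    rw [hb.partialSum_sub_partialSum (hQ.monotone k.le_succ)]
    exact (hb.norm_sum_coeff_le hs _ _).trans (hy _)
  · rw [← hbz k, ← hbz l]
    calc ‖(y (N k) - y (N l)) - (b k - b l)‖
        = ‖(y (N k) - b k - S (Q (k + 1)) x) - (y (N l) - b l - S (Q (l + 1)) x)
            + (S (Q (k + 1)) x - S (Q (l + 1)) x)‖ := by congr 1; abel
      _ ≤ ‖y (N k) - b k - S (Q (k + 1)) x‖ + ‖y (N l) - b l - S (Q (l + 1)) x‖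
            + ‖S (Q (k + 1)) x - S (Q (l + 1)) x‖ :=
          (norm_add_le _ _).trans (by gcongr; exact norm_sub_le _ _)
      _ ≤ 2 * ε + 2 * ε + ε := by
          gcongr
          exacts [hrem k, hrem l, (hp _ (hQ0 _) _ (hQ0 _)).le]
      _ = 5 * ε := by ring

theorem le_of_separated
    (hrefl : Function.Surjective (NormedSpace.inclusionInDoubleDual ℝ X))
    {lam : ℝ} (hasym : IsAsymptoticC0 e lam) {σ : ℝ} {y : ℕ → X} (hy : ∀ n, ‖y n‖ ≤ 1)
    (hsep : ∀ n m, n ≠ m → σ ≤ ‖y n - y m‖) {ε : ℝ} (hε : 0 < ε) :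
    σ ≤ lam * (1 + ε) + 5 * ε := by
  obtain ⟨N, z, c, hN, hz, hc, hclose⟩ :=
    hb.exists_subseq_near_block_differences hs hrefl hy hε
  obtain ⟨k, l, hkl, hzkl⟩ := hasym.exists_norm_smul_sub_smul_le hz hc
  calc σ ≤ ‖y (N k) - y (N l)‖ := hsep _ _ (hN.injective.ne hkl.ne)
    _ ≤ ‖c k • z k - c l • z l‖ + ‖(y (N k) - y (N l)) - (c k • z k - c l • z l)‖ :=
        norm_le_insert' _ _
    _ ≤ lam * (1 + ε) + 5 * ε := add_le_add hzkl (hclose k l)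

end IsSchauderBasis

end

theorem kottman_le_of_asymptotic_c0_suppression_general (X : Type*) [NormedAddCommGroup X]
    [NormedSpace ℝ X]
    (hrefl : Function.Surjective (NormedSpace.inclusionInDoubleDual ℝ X))
    (e : ℕ → X) (hbasis : IsSchauderBasis e)
    (hsupp : SuppressionOneUnconditional e)
    (lam : ℝ) (hasym : IsAsymptoticC0 e lam) :
    kottmanConst X ≤ lam := by
  refine csSup_le ⟨0, le_rfl, 0, by simp, fun _ _ _ => norm_nonneg _⟩ ?_
  rintro σ ⟨-, y, hy, hsep⟩
  have hlim : Tendsto (fun ε => lam * (1 + ε) + 5 * ε) (𝓝[>] 0) (𝓝 lam) := by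
    have h : Continuous fun ε : ℝ => lam * (1 + ε) + 5 * ε := by fun_prop
    simpa using (h.tendsto 0).mono_left nhdsWithin_le_nhds
  exact ge_of_tendsto hlim <| eventually_nhdsWithin_of_forall fun ε hε =>
    hbasis.le_of_separated hsupp hrefl hasym hy hsep hε

/-- The sliding-hump upper bound for Tsirelson-like spaces (abstract form of Theorem 4.1):
a reflexive Banach space with a suppression `1`-unconditional, `λ`-asymptotic `c₀`
Schauder basis satisfies `K(X) ≤ λ`. -/
theorem kottman_le_of_asymptotic_c0_suppression (X : Type*) [NormedAddCommGroup X]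
    [NormedSpace ℝ X] [CompleteSpace X]
    (hrefl : Function.Surjective (NormedSpace.inclusionInDoubleDual ℝ X))
    (e : ℕ → X) (hbasis : IsSchauderBasis e)
    (hsupp : SuppressionOneUnconditional e)
    (lam : ℝ) (hasym : IsAsymptoticC0 e lam) :
    kottmanConst X ≤ lam :=
  kottman_le_of_asymptotic_c0_suppression_general X hrefl e hbasis hsupp lam hasym
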